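/- arXiv:2402.08651 — 2 statements merged into one kernel-verified Lean document; each statement's English description precedes it below -/
import Mathlib

section
/- Let s ≥ t ≥ 2, n ≥ 2s + t − 1, and let F' = F_1 ∪ F_2 ∪ F_3 ∪ F_4 be the lantern construction. If F_1, …, F_t ∈ F' are pairwise incomparable under inclusion, then |⋃_{i=1}^{t} (F_i ∩ [s+t−1])| ≥ t. -/
/-- `C` is a complete chain from `A` to `B`: totally ordered by inclusion,
with minimum `A`, maximum `B`, and `|C| = |B \ A| + 1`. -/
def IsCompleteChain (A B : Finset ℕ) (C : Finset (Finset ℕ)) : Prop :=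
  A ∈ C ∧ B ∈ C ∧ (∀ X ∈ C, A ⊆ X ∧ X ⊆ B) ∧
  (∀ X ∈ C, ∀ Y ∈ C, X ⊆ Y ∨ Y ⊆ X) ∧
  C.card = (B \ A).card + 1

/-- The first increment set of `L` (w.r.t. bottom `A`): the union of the sets in
`L` of size `|A| + 1`, minus `A`. -/
def firstIncrementSet (A : Finset ℕ) (L : Finset (Finset ℕ)) : Finset ℕ :=
  ((L.filter fun X => X.card = A.card + 1).sup id) \ A

/-- The last increment set of `L` (w.r.t. top `B`): `B` minus the intersection of
the sets in `L` of size `|B| - 1`. -/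
def lastIncrementSet (B : Finset ℕ) (L : Finset (Finset ℕ)) : Finset ℕ :=
  B.filter fun x => ∃ X ∈ L, X.card = B.card - 1 ∧ x ∉ X

/-- `L` is a union of `k` pairwise internally disjoint complete chains from `A` to `B`. -/
def IsLanternUnion (A B : Finset ℕ) (k : ℕ) (L : Finset (Finset ℕ)) : Prop :=
  ∃ C : Fin k → Finset (Finset ℕ),
    (∀ i, IsCompleteChain A B (C i)) ∧
    (∀ i j, i ≠ j → C i ∩ C j = {A, B}) ∧
    L = Finset.univ.biUnion C

/-- An upper `s`-lantern on `A`: a union of `s - 1` pairwise internally disjoint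
complete chains from `A` to `A ∪ [s+t+1, n]` whose last increment set is
`[s+t+1, 2s+t-1]`. -/
def IsUpperLantern (n s t : ℕ) (A : Finset ℕ) (L : Finset (Finset ℕ)) : Prop :=
  IsLanternUnion A (A ∪ Finset.Icc (s+t+1) n) (s-1) L ∧
  lastIncrementSet (A ∪ Finset.Icc (s+t+1) n) L = Finset.Icc (s+t+1) (2*s+t-1)

/-- A lower `t`-lantern on `A`: a union of `t - 1` pairwise internally disjoint
complete chains from `A` to `A ∪ [s+t+1, n]` whose first increment set is
`[s+t+1, s+2t-1]`. -/
def IsLowerLantern (n s t : ℕ) (A : Finset ℕ) (L : Finset (Finset ℕ)) : Prop :=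
  IsLanternUnion A (A ∪ Finset.Icc (s+t+1) n) (t-1) L ∧
  firstIncrementSet A L = Finset.Icc (s+t+1) (s+2*t-1)

/-- `F₁ = {[n]} ∪ {[n] \ {x} : x ∈ [s+t-1]}`. -/
def lanternF1 (n s t : ℕ) : Finset (Finset ℕ) :=
  insert (Finset.Icc 1 n) ((Finset.Icc 1 (s+t-1)).image fun x => (Finset.Icc 1 n).erase x)

/-- `F₂`: union over all `t`-element subsets `A` of `[s+t-1]` of the chosen upper lantern `Ls A`. -/
def lanternF2 (s t : ℕ) (Ls : Finset ℕ → Finset (Finset ℕ)) : Finset (Finset ℕ) :=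
  (Finset.powersetCard t (Finset.Icc 1 (s+t-1))).biUnion Ls

/-- `F₃`: union over all `(t-1)`-element subsets `A` of `[s+t-1]` of the chosen
lower lantern `Lt (A ∪ {s+t})`. -/
def lanternF3 (s t : ℕ) (Lt : Finset ℕ → Finset (Finset ℕ)) : Finset (Finset ℕ) :=
  (Finset.powersetCard (t-1) (Finset.Icc 1 (s+t-1))).biUnion fun A => Lt (insert (s+t) A)

/-- `F₄ = {∅} ∪ {{x} : x ∈ [s+t-1]}`. -/
def lanternF4 (s t : ℕ) : Finset (Finset ℕ) :=
  insert ∅ ((Finset.Icc 1 (s+t-1)).image fun x => ({x} : Finset ℕ))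

/-- The lantern construction `F' = F₁ ∪ F₂ ∪ F₃ ∪ F₄`. -/
def lanternFam (n s t : ℕ) (Ls Lt : Finset ℕ → Finset (Finset ℕ)) : Finset (Finset ℕ) :=
  lanternF1 n s t ∪ lanternF2 s t Ls ∪ lanternF3 s t Lt ∪ lanternF4 s t

/-!
Let `S = [s+t-1]` and `T = S ∩ ⋃ Gᵢ`. A member of `F₁` contains all of `S` but at most one
point, and a member of `F₂` contains a `t`-subset of `S`; either gives `|T| ≥ t`. A member of a
lower lantern on `A ∪ {s+t}` contains the `(t-1)`-set `A ⊆ S`; if `|T| < t` then `T = A`, which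
forces every `Gⱼ` into that same lantern, a union of `t - 1` chains, so two of the `t` sets are
comparable. Otherwise all `Gᵢ` lie in `F₄`, and an antichain of at least two sets of size `≤ 1`
consists of distinct singletons.
-/

open Finset

namespace IsLanternUnion

variable {A B : Finset ℕ} {k : ℕ} {L : Finset (Finset ℕ)}

lemma subset_of_mem (h : IsLanternUnion A B k L) {X : Finset ℕ} (hX : X ∈ L) :
    A ⊆ X ∧ X ⊆ B := by
  obtain ⟨C, hC, -, rfl⟩ := h
  obtain ⟨i, -, hi⟩ := mem_biUnion.1 hX
  exact (hC i).2.2.1 X hi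

lemma card_le_of_forall_not_subset (h : IsLanternUnion A B k L) {ι : Type*} [Fintype ι]
    {G : ι → Finset ℕ} (hG : ∀ i, G i ∈ L) (hinc : ∀ i j, i ≠ j → ¬ G i ⊆ G j) :
    Fintype.card ι ≤ k := by
  obtain ⟨C, hC, -, rfl⟩ := h
  choose f hf using fun i => mem_biUnion.1 (hG i)
  by_contra! hk
  obtain ⟨i, j, hij, hfij⟩ :=
    Fintype.exists_ne_map_eq_of_card_lt f (by rwa [Fintype.card_fin])
  rcases (hC (f i)).2.2.2.1 _ (hf i).2 _ (hfij ▸ (hf j).2) with hsub | hsub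
  · exact hinc i j hij hsub
  · exact hinc j i hij.symm hsub

end IsLanternUnion

section Trace

variable {α ι : Type*} {S A : Finset α} {G : ι → Finset α}
  [DecidablePred fun x => ∃ i, x ∈ G i]

lemma subset_filter_exists_mem (i : ι) (hAS : A ⊆ S) (hAG : A ⊆ G i) :
    A ⊆ S.filter fun x => ∃ i, x ∈ G i :=
  fun _ hx => mem_filter.2 ⟨hAS hx, i, hAG hx⟩

lemma card_le_card_filter_of_card_le_one [Fintype ι] [Nontrivial ι]
    (hinc : ∀ i j, i ≠ j → ¬ G i ⊆ G j) (hGS : ∀ i, G i ⊆ S) (hG : ∀ i, (G i).card ≤ 1) :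
    Fintype.card ι ≤ (S.filter fun x => ∃ i, x ∈ G i).card := by
  have hne : ∀ i, (G i).Nonempty := fun i => by
    obtain ⟨j, hji⟩ := exists_ne i
    rw [nonempty_iff_ne_empty]
    intro hi
    exact hinc i j hji.symm (hi ▸ empty_subset _)
  choose x hx using hne
  have hGx : ∀ i, G i = {x i} := fun i =>
    eq_singleton_iff_unique_mem.2 ⟨hx i, fun y hy => card_le_one.1 (hG i) _ hy _ (hx i)⟩
  have hinj : Set.InjOn x (univ : Finset ι) := fun i _ j _ hij => by
    by_contra hne
    exact hinc i j hne (by rw [hGx i, hGx j, hij])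
  simpa using card_le_card_of_injOn x
    (fun i _ => subset_filter_exists_mem i (hGS i) subset_rfl (hx i)) hinj

end Trace

section LanternFamily

variable {n s t : ℕ} {X : Finset ℕ}

lemma exists_erase_subset_of_mem_lanternF1 (hn : s + t - 1 ≤ n) (hX : X ∈ lanternF1 n s t) :
    ∃ x, (Icc 1 (s+t-1)).erase x ⊆ X := by
  have hS : Icc 1 (s+t-1) ⊆ Icc 1 n := Icc_subset_Icc_right hn
  rcases mem_insert.1 hX with rfl | hX
  · exact ⟨0, (erase_subset _ _).trans hS⟩
  · obtain ⟨x, -, rfl⟩ := mem_image.1 hX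
    exact ⟨x, erase_subset_erase x hS⟩

lemma exists_subset_of_mem_lanternF2 {Ls : Finset ℕ → Finset (Finset ℕ)}
    (hLs : ∀ A ∈ powersetCard t (Icc 1 (s+t-1)), IsUpperLantern n s t A (Ls A))
    (hX : X ∈ lanternF2 s t Ls) : ∃ A ∈ powersetCard t (Icc 1 (s+t-1)), A ⊆ X := by
  obtain ⟨A, hA, hXA⟩ := mem_biUnion.1 hX
  exact ⟨A, hA, ((hLs A hA).1.subset_of_mem hXA).1⟩

lemma subset_and_card_le_one_of_mem_lanternF4 (hX : X ∈ lanternF4 s t) :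
    X ⊆ Icc 1 (s+t-1) ∧ X.card ≤ 1 := by
  rcases mem_insert.1 hX with rfl | hX
  · simp
  · obtain ⟨x, hx, rfl⟩ := mem_image.1 hX
    simpa using hx

lemma le_card_of_mem_lowerLantern {Lt : Finset ℕ → Finset (Finset ℕ)}
    (hLt : ∀ A ∈ powersetCard (t-1) (Icc 1 (s+t-1)),
      IsLowerLantern n s t (insert (s+t) A) (Lt (insert (s+t) A)))
    {G : Fin t → Finset ℕ} (hG : ∀ j, G j ∈ lanternF3 s t Lt ∪ lanternF4 s t)
    (hinc : ∀ i j, i ≠ j → ¬ G i ⊆ G j) {i : Fin t} {A : Finset ℕ}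
    (hA : A ∈ powersetCard (t-1) (Icc 1 (s+t-1))) (hGi : G i ∈ Lt (insert (s+t) A)) :
    t ≤ ((Icc 1 (s+t-1)).filter fun x => ∃ i, x ∈ G i).card := by
  set T := (Icc 1 (s+t-1)).filter fun x => ∃ i, x ∈ G i
  by_contra! hT
  have hAG : insert (s+t) A ⊆ G i := ((hLt A hA).1.subset_of_mem hGi).1
  obtain ⟨hAS, hAcard⟩ := mem_powersetCard.1 hA
  have hAT : A = T := eq_of_subset_of_card_le
    (subset_filter_exists_mem i hAS ((subset_insert _ _).trans hAG)) (by omega)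
  have hall : ∀ j, G j ∈ Lt (insert (s+t) A) := by
    intro j
    rcases mem_union.1 (hG j) with hj | hj
    · obtain ⟨A', hA', hGj⟩ := mem_biUnion.1 hj
      have hA'G : insert (s+t) A' ⊆ G j := ((hLt A' hA').1.subset_of_mem hGj).1
      obtain ⟨hA'S, hA'card⟩ := mem_powersetCard.1 hA'
      obtain rfl : A' = A := eq_of_subset_of_card_le
        ((subset_filter_exists_mem j hA'S ((subset_insert _ _).trans hA'G)).trans hAT.ge) (by omega)
      exact hGj
    · -- `G j ⊆ T = A ⊆ G i` forces `j = i`, yet `s + t ∈ G i` lies outside `[s+t-1]`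
      have hGjS := (subset_and_card_le_one_of_mem_lanternF4 hj).1
      have hGji : G j ⊆ G i :=
        ((subset_filter_exists_mem j hGjS subset_rfl).trans hAT.ge).trans
          ((subset_insert _ _).trans hAG)
      obtain rfl : j = i := by_contra fun hji => hinc j i hji hGji
      have := mem_Icc.1 (hGjS (hAG (mem_insert_self _ _)))
      omega
  have := (hLt A hA).1.card_le_of_forall_not_subset hall hinc
  rw [Fintype.card_fin] at this
  omega

end LanternFamily

/-- any `t` pairwise incomparable members of the lantern
construction `F'` have `|⋃ᵢ (Fᵢ ∩ [s+t-1])| ≥ t`. -/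
theorem stmt6
    (n s t : ℕ) (hts : t ≤ s) (ht : 2 ≤ t) (hn : 2*s + t - 1 ≤ n)
    (Ls Lt : Finset ℕ → Finset (Finset ℕ))
    (hLs : ∀ A ∈ Finset.powersetCard t (Finset.Icc 1 (s+t-1)),
      IsUpperLantern n s t A (Ls A))
    (hLt : ∀ A ∈ Finset.powersetCard (t-1) (Finset.Icc 1 (s+t-1)),
      IsLowerLantern n s t (insert (s+t) A) (Lt (insert (s+t) A)))
    (G : Fin t → Finset ℕ)
    (hG : ∀ i, G i ∈ lanternFam n s t Ls Lt)
    (hinc : ∀ i j, i ≠ j → ¬ G i ⊆ G j) :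
    t ≤ ((Finset.Icc 1 (s+t-1)).filter fun x => ∃ i, x ∈ G i).card := by
  by_cases h1 : ∃ i, G i ∈ lanternF1 n s t
  · obtain ⟨i, hi⟩ := h1
    obtain ⟨x, hx⟩ := exists_erase_subset_of_mem_lanternF1 (by omega) hi
    calc t ≤ (Icc 1 (s+t-1)).card - 1 := by rw [Nat.card_Icc]; omega
      _ ≤ ((Icc 1 (s+t-1)).erase x).card := pred_card_le_card_erase
      _ ≤ _ := card_le_card (subset_filter_exists_mem i (erase_subset _ _) hx)
  by_cases h2 : ∃ i, G i ∈ lanternF2 s t Ls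
  · obtain ⟨i, hi⟩ := h2
    obtain ⟨A, hA, hAG⟩ := exists_subset_of_mem_lanternF2 hLs hi
    obtain ⟨hAS, rfl⟩ := mem_powersetCard.1 hA
    exact card_le_card (subset_filter_exists_mem i hAS hAG)
  push Not at h1 h2
  have h34 : ∀ j, G j ∈ lanternF3 s t Lt ∪ lanternF4 s t := fun j => by
    have := hG j
    simp only [lanternFam, mem_union] at this ⊢
    tauto
  by_cases h3 : ∃ i, G i ∈ lanternF3 s t Lt
  · obtain ⟨i, hi⟩ := h3
    obtain ⟨A, hA, hGi⟩ := mem_biUnion.1 hi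
    exact le_card_of_mem_lowerLantern hLt h34 hinc hA hGi
  push Not at h3
  have h4 j := subset_and_card_le_one_of_mem_lanternF4 ((mem_union.1 (h34 j)).resolve_left (h3 j))
  have := Fin.nontrivial_iff_two_le.2 ht
  simpa using card_le_card_filter_of_card_le_one hinc (fun j => (h4 j).1) (fun j => (h4 j).2)
end

section
/- Let s ≥ t ≥ 2, n ≥ 2s + t − 1, let F' be the lantern construction and F = F' ∪ F_5 the completed construction. If F ∈ 2^[n] ∖ F satisfies t ≤ |F ∩ [s+t−1]| < s + t − 1, then F ∪ {F} contains an induced copy of K_{s,t}. -/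
open Finset

/-- A family of finite sets contains an induced copy of the complete bipartite
poset `K_{s,t}`: `s` pairwise incomparable "upper" sets and `t` pairwise
incomparable "lower" sets, each lower set strictly contained in each upper set. -/
def ContainsIndKst (s t : ℕ) (F : Finset (Finset ℕ)) : Prop :=
  ∃ (U : Fin s → Finset ℕ) (D : Fin t → Finset ℕ),
    (∀ i, U i ∈ F) ∧ (∀ j, D j ∈ F) ∧
    (∀ i j, i ≠ j → ¬ U i ⊆ U j) ∧
    (∀ i j, i ≠ j → ¬ D i ⊆ D j) ∧
    (∀ i j, D j ⊂ U i)

/-- `F ⊆ 2^[n]` is induced `K_{s,t}`-saturated. -/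
def IsIndKstSaturated (n s t : ℕ) (F : Finset (Finset ℕ)) : Prop :=
  (∀ A ∈ F, A ⊆ Finset.Icc 1 n) ∧
  ¬ ContainsIndKst s t F ∧
  ∀ G ⊆ Finset.Icc 1 n, G ∉ F → ContainsIndKst s t (insert G F)

/-- `sat*(n, K_{s,t})`: minimum size of an induced `K_{s,t}`-saturated family in `2^[n]`. -/
noncomputable def satStarKst (n s t : ℕ) : ℕ :=
  sInf {m | ∃ F : Finset (Finset ℕ), IsIndKstSaturated n s t F ∧ F.card = m}

/-- `G₁ = ⋃_{i=2}^{s} {[n] \ A : A an i-element subset of [2s+t-1]}`. -/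
def lanternG1 (n s t : ℕ) : Finset (Finset ℕ) :=
  (Finset.Icc 2 s).biUnion fun i =>
    (Finset.powersetCard i (Finset.Icc 1 (2*s+t-1))).image fun A => Finset.Icc 1 n \ A

/-- `G₂ = ⋃_{i=2}^{t} {A : A an i-element subset of [s+2t-1]}`. -/
def lanternG2 (s t : ℕ) : Finset (Finset ℕ) :=
  (Finset.Icc 2 t).biUnion fun i => Finset.powersetCard i (Finset.Icc 1 (s+2*t-1))

/-!
If `F` lies in `G₁ ∪ G₂`, maximality of `F₅` already gives the copy. Otherwise choose a
`t`-set `A ⊆ F ∩ [s+t-1]`: its singletons (in `F₄`) are the lower level, and `F` together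
with `s - 1` sets of the upper lantern on `A` is the upper level. If `A ⊊ F ⊊ B`, the top of
the lantern, take the set of size `|F|` on each chain of the lantern; if `F ⊈ B`, take the
coatoms `B \ {y}`, `y` in the last increment set. The one remaining configuration,
`B \ {y} ⊊ F`, forces `F = [n] \ C` with `C ⊆ [2s+t-1]`, `1 ≤ |C| ≤ s`, and `C` meeting
`[s+t-1]`, so that `F` would already lie in `F₁ ∪ G₁`.
-/

theorem ContainsIndKst.mono {s t : ℕ} {𝓕 𝓖 : Finset (Finset ℕ)} (h : ContainsIndKst s t 𝓕)
    (h𝓕𝓖 : 𝓕 ⊆ 𝓖) : ContainsIndKst s t 𝓖 := by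
  obtain ⟨U, D, hU, hD, hUU, hDD, hDU⟩ := h
  exact ⟨U, D, fun i => h𝓕𝓖 (hU i), fun j => h𝓕𝓖 (hD j), hUU, hDD, hDU⟩

theorem containsIndKst_of_isAntichain {s t : ℕ} {𝓕 𝓤 𝓓 : Finset (Finset ℕ)} (hU : 𝓤 ⊆ 𝓕)
    (hD : 𝓓 ⊆ 𝓕) (hUs : #𝓤 = s) (hDt : #𝓓 = t)
    (hUa : IsAntichain (· ⊆ ·) (𝓤 : Set (Finset ℕ)))
    (hDa : IsAntichain (· ⊆ ·) (𝓓 : Set (Finset ℕ))) (hDU : ∀ D ∈ 𝓓, ∀ U ∈ 𝓤, D ⊂ U) :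
    ContainsIndKst s t 𝓕 := by
  subst hUs hDt
  let u := 𝓤.equivFin.symm
  let d := 𝓓.equivFin.symm
  refine ⟨fun i => u i, fun j => d j, fun i => hU (u i).2, fun j => hD (d j).2,
    fun i j hij => hUa (u i).2 (u j).2 ?_, fun i j hij => hDa (d i).2 (d j).2 ?_,
    fun i j => hDU _ (d j).2 _ (u i).2⟩
  · exact (Subtype.val_injective.comp u.injective).ne hij
  · exact (Subtype.val_injective.comp d.injective).ne hij

theorem containsIndKst_of_isAntichain_of_singleton_mem {s t : ℕ} {𝓕 𝓤 : Finset (Finset ℕ)}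
    {A : Finset ℕ} (hU : 𝓤 ⊆ 𝓕) (hUs : #𝓤 = s) (hUa : IsAntichain (· ⊆ ·) (𝓤 : Set (Finset ℕ)))
    (hAU : ∀ U ∈ 𝓤, A ⊆ U) (hA : ∀ a ∈ A, {a} ∈ 𝓕) (hAt : #A = t) (ht : 2 ≤ t) :
    ContainsIndKst s t 𝓕 := by
  refine containsIndKst_of_isAntichain hU (𝓓 := A.image singleton) ?_ hUs
    (by rw [card_image_of_injective _ singleton_injective, hAt]) hUa ?_ ?_
  · simpa only [image_subset_iff] using hA
  · refine Set.Sized.isAntichain (r := 1) fun D hD => ?_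
    obtain ⟨a, -, rfl⟩ := mem_image.1 hD
    exact card_singleton a
  · intro D hD U hU'
    obtain ⟨a, ha, rfl⟩ := mem_image.1 hD
    refine (singleton_subset_iff.2 (hAU U hU' ha)).ssubset_of_ne fun haU => ?_
    have := card_le_card (hAU U hU')
    rw [← haU, card_singleton] at this
    omega

section Chains

variable {A B : Finset ℕ}

theorem IsCompleteChain.injOn_card {C : Finset (Finset ℕ)} (h : IsCompleteChain A B C) :
    Set.InjOn card (C : Set (Finset ℕ)) := by
  intro X hX Y hY hXY
  rcases h.2.2.2.1 X hX Y hY with hXY' | hYX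
  · exact eq_of_subset_of_card_le hXY' hXY.ge
  · exact (eq_of_subset_of_card_le hYX hXY.le).symm

theorem IsCompleteChain.image_card {C : Finset (Finset ℕ)} (h : IsCompleteChain A B C) :
    C.image card = Icc #A #B := by
  have hinj := h.injOn_card
  obtain ⟨hA, -, hbet, -, hcard⟩ := h
  have hAB := card_le_card (hbet A hA).2
  refine eq_of_subset_of_card_le (fun k hk => ?_) ?_
  · obtain ⟨X, hX, rfl⟩ := mem_image.1 hk
    exact mem_Icc.2 ⟨card_le_card (hbet X hX).1, card_le_card (hbet X hX).2⟩
  · rw [card_image_of_injOn hinj, hcard, card_sdiff_of_subset (hbet A hA).2,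
      Nat.card_Icc]
    omega

theorem IsCompleteChain.exists_card_eq {C : Finset (Finset ℕ)} (h : IsCompleteChain A B C)
    {k : ℕ} (hAk : #A ≤ k) (hkB : k ≤ #B) : ∃ X ∈ C, #X = k :=
  mem_image.1 (h.image_card ▸ mem_Icc.2 ⟨hAk, hkB⟩)

variable {k : ℕ} {L : Finset (Finset ℕ)}

theorem IsLanternUnion.subset_of_mem_s10 (h : IsLanternUnion A B k L) {X : Finset ℕ} (hX : X ∈ L) :
    A ⊆ X ∧ X ⊆ B := by
  obtain ⟨C, hC, -, rfl⟩ := h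
  obtain ⟨i, -, hXi⟩ := mem_biUnion.1 hX
  exact (hC i).2.2.1 X hXi

theorem IsLanternUnion.left_mem (h : IsLanternUnion A B k L) (hk : 0 < k) : A ∈ L := by
  obtain ⟨C, hC, -, rfl⟩ := h
  exact mem_biUnion.2 ⟨⟨0, hk⟩, mem_univ _, (hC _).1⟩

theorem IsLanternUnion.right_mem (h : IsLanternUnion A B k L) (hk : 0 < k) : B ∈ L := by
  obtain ⟨C, hC, -, rfl⟩ := h
  exact mem_biUnion.2 ⟨⟨0, hk⟩, mem_univ _, (hC _).2.1⟩

/-- Internal disjointness makes the level-`j` sets of the `k` chains distinct. -/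
theorem IsLanternUnion.exists_sized_subset (h : IsLanternUnion A B k L) {j : ℕ} (hAj : #A < j)
    (hjB : j < #B) : ∃ 𝓔 ⊆ L, #𝓔 = k ∧ (𝓔 : Set (Finset ℕ)).Sized j := by
  obtain ⟨C, hC, hdisj, rfl⟩ := h
  choose E hEC hE using fun i => (hC i).exists_card_eq hAj.le hjB.le
  have hEinj : Function.Injective E := by
    intro i i' hii'
    by_contra hne
    have hmem := hdisj i i' hne ▸ mem_inter.2 ⟨hEC i, hii' ▸ hEC i'⟩
    rcases mem_insert.1 hmem with hEA | hEB
    · exact hAj.ne (hEA ▸ hE i)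
    · exact hjB.ne' (mem_singleton.1 hEB ▸ hE i)
  refine ⟨univ.image E, fun X hX => ?_, ?_, fun X hX => ?_⟩
  · obtain ⟨i, -, rfl⟩ := mem_image.1 hX
    exact mem_biUnion.2 ⟨i, mem_univ i, hEC i⟩
  · rw [card_image_of_injective _ hEinj, card_univ, Fintype.card_fin]
  · obtain ⟨i, -, rfl⟩ := mem_image.1 (mem_coe.1 hX)
    exact hE i

theorem IsLanternUnion.exists_isAntichain_insert (h : IsLanternUnion A B k L) (hk : 0 < k)
    {F : Finset ℕ} (hAF : A ⊆ F) (hFB : F ⊆ B) (hFL : F ∉ L) :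
    ∃ 𝓤 ⊆ L, #𝓤 = k ∧ IsAntichain (· ⊆ ·) (insert F (𝓤 : Set (Finset ℕ))) := by
  have hAF' : #A < #F := card_lt_card
    (hAF.ssubset_of_ne fun hAF => hFL (hAF ▸ h.left_mem hk))
  have hFB' : #F < #B := card_lt_card
    (hFB.ssubset_of_ne fun hFB => hFL (hFB ▸ h.right_mem hk))
  obtain ⟨𝓔, h𝓔L, h𝓔k, h𝓔⟩ := h.exists_sized_subset hAF' hFB'
  refine ⟨𝓔, h𝓔L, h𝓔k, Set.Sized.isAntichain (r := #F) fun X hX => ?_⟩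
  rcases hX with rfl | hX
  exacts [rfl, h𝓔 hX]

end Chains

theorem erase_mem_of_mem_lastIncrementSet {B : Finset ℕ} {L : Finset (Finset ℕ)} {y : ℕ}
    (hL : ∀ X ∈ L, X ⊆ B) (hy : y ∈ lastIncrementSet B L) : B.erase y ∈ L := by
  obtain ⟨hyB, X, hXL, hX, hyX⟩ := mem_filter.1 hy
  have hXeq : X = B.erase y := eq_of_subset_of_card_le (subset_erase.2 ⟨hL X hXL, hyX⟩)
    (by rw [card_erase_of_mem hyB, hX])
  exact hXeq ▸ hXL

theorem isAntichain_insert_image_erase {B F Y : Finset ℕ} (hY : Y ⊆ B) (hFB : ¬ F ⊆ B)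
    (hYF : ∀ y ∈ Y, ¬ B.erase y ⊆ F) :
    IsAntichain (· ⊆ ·) (insert F (Y.image B.erase : Set (Finset ℕ))) := by
  refine IsAntichain.insert (Set.Sized.isAntichain (r := #B - 1) fun X hX => ?_)
    (fun X hX _ => ?_) (fun X hX _ hFX => ?_) <;> obtain ⟨y, hy, rfl⟩ := mem_image.1 (mem_coe.1 hX)
  · exact card_erase_of_mem (hY hy)
  · exact hYF y hy
  · exact hFB (hFX.trans (erase_subset y B))

section Lantern

variable {n s t : ℕ} {Ls Lt : Finset ℕ → Finset (Finset ℕ)}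

theorem mem_lanternFam_of_mem_upperLantern {A X : Finset ℕ}
    (hA : A ∈ powersetCard t (Icc 1 (s+t-1))) (hX : X ∈ Ls A) : X ∈ lanternFam n s t Ls Lt := by
  simp only [lanternFam, lanternF2, mem_union, mem_biUnion]
  exact Or.inl (Or.inl (Or.inr ⟨A, hA, hX⟩))

theorem singleton_mem_lanternFam {x : ℕ} (hx : x ∈ Icc 1 (s+t-1)) :
    {x} ∈ lanternFam n s t Ls Lt := by
  simp only [lanternFam, lanternF4, mem_union, mem_insert, mem_image]
  exact Or.inr (Or.inr ⟨x, hx, rfl⟩)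

theorem erase_mem_lanternFam {x : ℕ} (hx : x ∈ Icc 1 (s+t-1)) :
    (Icc 1 n).erase x ∈ lanternFam n s t Ls Lt := by
  simp only [lanternFam, lanternF1, mem_union, mem_insert, mem_image]
  exact Or.inl (Or.inl (Or.inl (Or.inr ⟨x, hx, rfl⟩)))

theorem sdiff_mem_lanternFam_or_lanternG1 {C : Finset ℕ} {x : ℕ} (hC : C ⊆ Icc 1 (2*s+t-1))
    (hCs : #C ≤ s) (hx : x ∈ C) (hxs : x ≤ s+t-1) :
    Icc 1 n \ C ∈ lanternFam n s t Ls Lt ∨ Icc 1 n \ C ∈ lanternG1 n s t := by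
  rcases (one_le_card.2 ⟨x, hx⟩).eq_or_lt with hC1 | hC2
  · obtain ⟨a, rfl⟩ := card_eq_one.1 hC1.symm
    obtain rfl := mem_singleton.1 hx
    rw [sdiff_singleton_eq_erase]
    exact Or.inl (erase_mem_lanternFam (mem_Icc.2 ⟨(mem_Icc.1 (hC hx)).1, hxs⟩))
  · simp only [lanternG1, mem_biUnion, mem_image, mem_powersetCard]
    exact Or.inr ⟨#C, mem_Icc.2 ⟨hC2, hCs⟩, C, ⟨hC, rfl⟩, rfl⟩

theorem disjoint_Icc_of_subset_Icc {A : Finset ℕ} (hA : A ⊆ Icc 1 (s+t-1)) :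
    Disjoint A (Icc (s+t+1) n) := by
  refine disjoint_left.2 fun a ha ha' => ?_
  have := mem_Icc.1 (hA ha)
  have := mem_Icc.1 ha'
  omega

/-- The lantern top `B = A ∪ [s+t+1, n]` has `n - s` elements, so a set strictly above a
coatom of `B` misses at most `s` elements of `[n]`. -/
theorem card_sdiff_le_of_erase_ssubset (hn : 2*s+t-1 ≤ n) {A F : Finset ℕ} {y : ℕ}
    (hA : A ∈ powersetCard t (Icc 1 (s+t-1))) (hy : y ∈ Icc (s+t+1) (2*s+t-1))
    (hF : F ⊆ Icc 1 n) (hyF : (A ∪ Icc (s+t+1) n).erase y ⊂ F) : #(Icc 1 n \ F) ≤ s := by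
  obtain ⟨hAS, hAt⟩ := mem_powersetCard.1 hA
  have hy' := mem_Icc.1 hy
  have hyB : y ∈ A ∪ Icc (s+t+1) n := mem_union_right _ (mem_Icc.2 ⟨hy'.1, by omega⟩)
  have hlt := card_lt_card hyF
  rw [card_erase_of_mem hyB, card_union_of_disjoint (disjoint_Icc_of_subset_Icc hAS), hAt,
    Nat.card_Icc] at hlt
  have := card_le_card hF
  rw [card_sdiff_of_subset hF, Nat.card_Icc]
  rw [Nat.card_Icc] at this
  omega

theorem mem_lanternFam_or_lanternG1_of_erase_ssubset (hn : 2*s+t-1 ≤ n) {A F : Finset ℕ}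
    {x y : ℕ} (hA : A ∈ powersetCard t (Icc 1 (s+t-1))) (hy : y ∈ Icc (s+t+1) (2*s+t-1))
    (hF : F ⊆ Icc 1 n) (hyF : (A ∪ Icc (s+t+1) n).erase y ⊂ F) (hx : x ∈ Icc 1 (s+t-1))
    (hxF : x ∉ F) : F ∈ lanternFam n s t Ls Lt ∨ F ∈ lanternG1 n s t := by
  have hxs := mem_Icc.1 hx
  rw [← Finset.sdiff_sdiff_eq_self hF]
  refine sdiff_mem_lanternFam_or_lanternG1 (fun z hz => ?_)
    (card_sdiff_le_of_erase_ssubset hn hA hy hF hyF)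
    (mem_sdiff.2 ⟨mem_Icc.2 ⟨hxs.1, by omega⟩, hxF⟩) hxs.2
  obtain ⟨hzn, hzF⟩ := mem_sdiff.1 hz
  have hz := mem_Icc.1 hzn
  have hy := mem_Icc.1 hy
  refine mem_Icc.2 ⟨hz.1, not_lt.1 fun hz' => hzF (hyF.subset ?_)⟩
  exact mem_erase.2 ⟨by omega, mem_union_right _ (mem_Icc.2 ⟨by omega, hz.2⟩)⟩

theorem exists_isAntichain_insert_of_upperLantern (hs : 2 ≤ s) (hn : 2*s+t-1 ≤ n)
    {A F : Finset ℕ} {x : ℕ} (hA : A ∈ powersetCard t (Icc 1 (s+t-1)))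
    (hL : IsUpperLantern n s t A (Ls A)) (hF : F ⊆ Icc 1 n) (hAF : A ⊆ F)
    (hFfam : F ∉ lanternFam n s t Ls Lt) (hFG : F ∉ lanternG1 n s t)
    (hx : x ∈ Icc 1 (s+t-1)) (hxF : x ∉ F) :
    ∃ 𝓤 ⊆ Ls A, #𝓤 = s - 1 ∧ IsAntichain (· ⊆ ·) (insert F (𝓤 : Set (Finset ℕ))) := by
  obtain ⟨hU, hlast⟩ := hL
  have hFL : F ∉ Ls A := fun h => hFfam (mem_lanternFam_of_mem_upperLantern hA h)
  set B := A ∪ Icc (s+t+1) n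
  by_cases hFB : F ⊆ B
  · exact hU.exists_isAntichain_insert (by omega) hAF hFB hFL
  set Y := Icc (s+t+1) (2*s+t-1)
  have hYB : Y ⊆ B := hlast ▸ filter_subset _ _
  have hcoatom : ∀ y ∈ Y, B.erase y ∈ Ls A := fun y hy =>
    erase_mem_of_mem_lastIncrementSet (fun X hX => (hU.subset_of_mem_s10 hX).2) (hlast ▸ hy)
  refine ⟨Y.image B.erase, image_subset_iff.2 hcoatom, ?_,
    isAntichain_insert_image_erase hYB hFB fun y hy hyF => ?_⟩
  · rw [card_image_of_injOn ((erase_injOn B).mono hYB), Nat.card_Icc]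
    omega
  · have hss : B.erase y ⊂ F := hyF.ssubset_of_ne fun h => hFL (h ▸ hcoatom y hy)
    rcases mem_lanternFam_or_lanternG1_of_erase_ssubset hn hA hy hF hss hx hxF with h | h
    exacts [hFfam h, hFG h]

end Lantern

theorem stmt10_general
    (n s t : ℕ) (hts : t ≤ s) (ht : 2 ≤ t) (hn : 2*s + t - 1 ≤ n)
    (Ls Lt : Finset ℕ → Finset (Finset ℕ))
    (hLs : ∀ A ∈ Finset.powersetCard t (Finset.Icc 1 (s+t-1)),
      IsUpperLantern n s t A (Ls A))
    (F5 : Finset (Finset ℕ))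
    (hF5max : ∀ X ∈ lanternG1 n s t ∪ lanternG2 s t, X ∉ F5 →
      ContainsIndKst s t (lanternFam n s t Ls Lt ∪ insert X F5))
    (F : Finset ℕ) (hFsub : F ⊆ Finset.Icc 1 n)
    (hFnot : F ∉ lanternFam n s t Ls Lt ∪ F5)
    (hlow : t ≤ (F ∩ Finset.Icc 1 (s+t-1)).card)
    (hhigh : (F ∩ Finset.Icc 1 (s+t-1)).card < s + t - 1) :
    ContainsIndKst s t (insert F (lanternFam n s t Ls Lt ∪ F5)) := by
  have hFfam : F ∉ lanternFam n s t Ls Lt := fun h => hFnot (mem_union_left _ h)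
  by_cases hG : F ∈ lanternG1 n s t ∪ lanternG2 s t
  · simpa only [union_insert] using hF5max F hG fun h => hFnot (mem_union_right _ h)
  obtain ⟨A, hAFS, hAt⟩ := exists_subset_card_eq hlow
  obtain ⟨hAF, hAS⟩ := subset_inter_iff.1 hAFS
  have hA : A ∈ powersetCard t (Icc 1 (s+t-1)) := mem_powersetCard.2 ⟨hAS, hAt⟩
  obtain ⟨x, hx, hxF⟩ : ∃ x ∈ Icc 1 (s+t-1), x ∉ F := by
    obtain ⟨x, hx, hxF⟩ := exists_mem_notMem_of_card_lt_card
      (hhigh.trans_eq (by simp) : #(F ∩ Icc 1 (s+t-1)) < #(Icc 1 (s+t-1)))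
    exact ⟨x, hx, fun h => hxF (mem_inter.2 ⟨h, hx⟩)⟩
  obtain ⟨𝓤, hUL, hUs, hUa⟩ := exists_isAntichain_insert_of_upperLantern (by omega) hn hA
    (hLs A hA) hFsub hAF hFfam (fun h => hG (mem_union_left _ h)) hx hxF
  have hUfam : 𝓤 ⊆ lanternFam n s t Ls Lt := fun X hX =>
    mem_lanternFam_of_mem_upperLantern hA (hUL hX)
  have hFU : F ∉ 𝓤 := fun h => hFfam (hUfam h)
  have hAU : ∀ U ∈ insert F 𝓤, A ⊆ U := by
    simp only [mem_insert, forall_eq_or_imp]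
    exact ⟨hAF, fun U hU => ((hLs A hA).1.subset_of_mem_s10 (hUL hU)).1⟩
  refine (containsIndKst_of_isAntichain_of_singleton_mem (insert_subset_insert F hUfam)
    (by rw [card_insert_of_notMem hFU, hUs]; omega) (by rwa [coe_insert]) hAU
    (fun a ha => mem_insert_of_mem (singleton_mem_lanternFam (hAS ha))) hAt ht).mono ?_
  exact insert_subset_insert F subset_union_left

/-- for the completed construction `F = F' ∪ F₅`, adding any
`F ∈ 2^[n] \ F` with `t ≤ |F ∩ [s+t-1]| < s + t - 1` creates an induced `K_{s,t}`. -/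
theorem stmt10
    (n s t : ℕ) (hts : t ≤ s) (ht : 2 ≤ t) (hn : 2*s + t - 1 ≤ n)
    (Ls Lt : Finset ℕ → Finset (Finset ℕ))
    (hLs : ∀ A ∈ Finset.powersetCard t (Finset.Icc 1 (s+t-1)),
      IsUpperLantern n s t A (Ls A))
    (hLt : ∀ A ∈ Finset.powersetCard (t-1) (Finset.Icc 1 (s+t-1)),
      IsLowerLantern n s t (insert (s+t) A) (Lt (insert (s+t) A)))
    (F5 : Finset (Finset ℕ))
    (hF5sub : F5 ⊆ lanternG1 n s t ∪ lanternG2 s t)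
    (hF5free : ¬ ContainsIndKst s t (lanternFam n s t Ls Lt ∪ F5))
    (hF5max : ∀ X ∈ lanternG1 n s t ∪ lanternG2 s t, X ∉ F5 →
      ContainsIndKst s t (lanternFam n s t Ls Lt ∪ insert X F5))
    (F : Finset ℕ) (hFsub : F ⊆ Finset.Icc 1 n)
    (hFnot : F ∉ lanternFam n s t Ls Lt ∪ F5)
    (hlow : t ≤ (F ∩ Finset.Icc 1 (s+t-1)).card)
    (hhigh : (F ∩ Finset.Icc 1 (s+t-1)).card < s + t - 1) :
    ContainsIndKst s t (insert F (lanternFam n s t Ls Lt ∪ F5)) :=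
  stmt10_general n s t hts ht hn Ls Lt hLs F5 hF5max F hFsub hFnot hlow hhigh
end
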